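/- arXiv:2007.13191 — 4 statements merged into one kernel-verified Lean document; each statement's English description precedes it below -/
import Mathlib

section
/- Let 0 < ρ < 1 and let p be a real number with p ∉ {−1, 1, 3}. Then I_{p−4} = −R_{p−3}/(p−3) − R_{p−1}/((p−1)(p−3)) − p·R_{p+1}/((p+1)(p−1)(p−3)) + (p+2)·p·S_{p+2}/((p+1)(p−1)(p−3)), and for p ∉ {−1, 1}: I_{p−2} = −R_{p−1}/(p−1) − R_{p+1}/((p+1)(p−1)) + (p+2)·S_{p+2}/((p+1)(p−1)). -/
/-- `I_q = ∫_{√ρ}^{1} √(1−ξ²) ξ^q dξ`. -/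
noncomputable def Iq (ρ q : ℝ) : ℝ :=
  ∫ ξ in Real.sqrt ρ..1, Real.sqrt (1 - ξ ^ 2) * ξ ^ q

/-- `S_q = ∫_{arcsin √ρ}^{π/2} sin^q φ dφ`. -/
noncomputable def Sq (ρ q : ℝ) : ℝ :=
  ∫ φ in Real.arcsin (Real.sqrt ρ)..(Real.pi / 2), Real.sin φ ^ q

/-- `R_q = ρ^{q/2} √(1−ρ)`. -/
noncomputable def Rq (ρ q : ℝ) : ℝ := ρ ^ (q / 2) * Real.sqrt (1 - ρ)

/-!
Substituting `ξ = sin φ` turns `I_q` into `S_q − S_{q+2}`, and differentiating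
`cos φ · sin^{q+1} φ` gives the reduction formula `(q+1) S_q − (q+2) S_{q+2} = −R_{q+1}`
(the boundary term vanishes at `π/2`, and at `arcsin √ρ` it is `√(1−ρ) · ρ^{(q+1)/2}`).
Applying the reduction formula at `q = p−4, p−2, p` expresses every `S` in terms of
`S_{p+2}` and the `R`'s.
-/

open Real Set intervalIntegral

lemma Real.rpow_add_two {x : ℝ} (hx : x ≠ 0) (q : ℝ) : x ^ (q + 2) = x ^ q * x ^ 2 := by
  exact_mod_cast rpow_add_natCast hx q 2

lemma sin_ne_zero_of_mem_uIcc {a b φ : ℝ} (ha : a ∈ Ioo 0 π) (hb : b ∈ Ioo 0 π)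
    (hφ : φ ∈ uIcc a b) : sin φ ≠ 0 :=
  (sin_pos_of_mem_Ioo (ordConnected_Ioo.uIcc_subset ha hb hφ)).ne'

lemma continuousOn_sin_rpow {s : Set ℝ} (hs : ∀ φ ∈ s, sin φ ≠ 0) (q : ℝ) :
    ContinuousOn (fun φ => sin φ ^ q) s :=
  continuous_sin.continuousOn.rpow_const fun φ hφ => Or.inl (hs φ hφ)

lemma intervalIntegrable_sin_rpow {a b : ℝ} (ha : a ∈ Ioo 0 π) (hb : b ∈ Ioo 0 π) (q : ℝ) :
    IntervalIntegrable (fun φ => sin φ ^ q) MeasureTheory.volume a b :=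
  (continuousOn_sin_rpow (fun _ => sin_ne_zero_of_mem_uIcc ha hb) q).intervalIntegrable

lemma hasDerivAt_cos_mul_sin_rpow {φ : ℝ} (hφ : sin φ ≠ 0) (q : ℝ) :
    HasDerivAt (fun x => cos x * sin x ^ (q + 1))
      ((q + 1) * sin φ ^ q - (q + 2) * sin φ ^ (q + 2)) φ := by
  refine ((hasDerivAt_cos φ).mul
    ((hasDerivAt_rpow_const (p := q + 1) (Or.inl hφ)).comp φ (hasDerivAt_sin φ))).congr_deriv ?_
  rw [Function.comp_apply, add_sub_cancel_right, rpow_add_two hφ, rpow_add_one hφ]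
  linear_combination ((q + 1) * sin φ ^ q) * cos_sq' φ

lemma integral_sin_rpow_reduction {a b : ℝ} (ha : a ∈ Ioo 0 π) (hb : b ∈ Ioo 0 π) (q : ℝ) :
    (q + 1) * (∫ φ in a..b, sin φ ^ q) - (q + 2) * ∫ φ in a..b, sin φ ^ (q + 2) =
      cos b * sin b ^ (q + 1) - cos a * sin a ^ (q + 1) := by
  have hsin (φ) (hφ : φ ∈ uIcc a b) : sin φ ≠ 0 := sin_ne_zero_of_mem_uIcc ha hb hφ
  rw [← integral_const_mul, ← integral_const_mul,
    ← integral_sub ((intervalIntegrable_sin_rpow ha hb q).const_mul _)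
      ((intervalIntegrable_sin_rpow ha hb (q + 2)).const_mul _)]
  refine integral_eq_sub_of_hasDerivAt
    (fun φ hφ => hasDerivAt_cos_mul_sin_rpow (hsin φ hφ) q) ?_
  exact (((continuousOn_sin_rpow hsin q).const_smul (q + 1)).sub
    ((continuousOn_sin_rpow hsin (q + 2)).const_smul (q + 2))).intervalIntegrable

lemma integral_sqrt_one_sub_sq_mul_rpow_sin {a b : ℝ} (ha : a ∈ Ioc 0 (π / 2))
    (hb : b ∈ Ioc 0 (π / 2)) (q : ℝ) :
    ∫ ξ in sin a..sin b, √(1 - ξ ^ 2) * ξ ^ q = ∫ φ in a..b, sin φ ^ q - sin φ ^ (q + 2) := by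
  have hsub : uIcc a b ⊆ Ioc 0 (π / 2) := ordConnected_Ioc.uIcc_subset ha hb
  have hsin (φ) (hφ : φ ∈ uIcc a b) : sin φ ≠ 0 :=
    (sin_pos_of_pos_of_lt_pi (hsub hφ).1 (by linarith [(hsub hφ).2, pi_pos])).ne'
  have hg : ContinuousOn (fun ξ => √(1 - ξ ^ 2) * ξ ^ q) (sin '' uIcc a b) := by
    refine (by fun_prop : Continuous fun ξ : ℝ => √(1 - ξ ^ 2)).continuousOn.mul
      (continuousOn_id.rpow_const ?_)
    rintro _ ⟨φ, hφ, rfl⟩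
    exact Or.inl (hsin φ hφ)
  rw [← integral_comp_mul_deriv' (fun φ _ => hasDerivAt_sin φ) continuous_cos.continuousOn hg]
  refine integral_congr fun φ hφ => ?_
  have hcos : cos φ = √(1 - sin φ ^ 2) :=
    cos_eq_sqrt_one_sub_sin_sq (by linarith [(hsub hφ).1, pi_pos]) (hsub hφ).2
  simp only [Function.comp_apply, ← hcos, rpow_add_two (hsin φ hφ)]
  linear_combination (sin φ ^ q) * cos_sq' φ

section

variable {ρ : ℝ} (h0 : 0 < ρ) (h1 : ρ < 1)
include h0 h1

lemma arcsin_sqrt_mem_Ioo : arcsin √ρ ∈ Ioo 0 (π / 2) :=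
  ⟨arcsin_pos.2 (sqrt_pos.2 h0), arcsin_lt_pi_div_two.2 ((sqrt_lt' one_pos).2 (by rwa [one_pow]))⟩

lemma sin_arcsin_sqrt : sin (arcsin √ρ) = √ρ :=
  sin_arcsin (by linarith [sqrt_nonneg ρ]) (sqrt_le_one.2 h1.le)

lemma Iq_eq_Sq_sub_Sq (q : ℝ) : Iq ρ q = Sq ρ q - Sq ρ (q + 2) := by
  have hα := arcsin_sqrt_mem_Ioo h0 h1
  have hπ : π / 2 ∈ Ioo 0 π := ⟨half_pos pi_pos, half_lt_self pi_pos⟩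
  have hS := integral_sqrt_one_sub_sq_mul_rpow_sin ⟨hα.1, hα.2.le⟩ ⟨hπ.1, le_rfl⟩ q
  rw [sin_arcsin_sqrt h0 h1, sin_pi_div_two] at hS
  have hα' : arcsin √ρ ∈ Ioo 0 π := ⟨hα.1, hα.2.trans hπ.2⟩
  rw [Iq, hS, integral_sub (intervalIntegrable_sin_rpow hα' hπ q)
    (intervalIntegrable_sin_rpow hα' hπ (q + 2)), Sq, Sq]

lemma Sq_reduction (q : ℝ) :
    (q + 1) * Sq ρ q - (q + 2) * Sq ρ (q + 2) = -Rq ρ (q + 1) := by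
  have hα := arcsin_sqrt_mem_Ioo h0 h1
  have hπ : π / 2 ∈ Ioo 0 π := ⟨half_pos pi_pos, half_lt_self pi_pos⟩
  have h := integral_sin_rpow_reduction ⟨hα.1, hα.2.trans hπ.2⟩ hπ q
  have hpow : √ρ ^ (q + 1) = ρ ^ ((q + 1) / 2) := by
    rw [sqrt_eq_rpow, ← rpow_mul h0.le, one_div_mul_eq_div, div_eq_mul_inv, mul_comm]
  rw [cos_pi_div_two, sin_arcsin_sqrt h0 h1, cos_arcsin, sq_sqrt h0.le, hpow] at h
  rw [Sq, Sq, Rq, h]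
  ring

end

/-- Expansions of `I_{p−4}` and `I_{p−2}` in terms of `R` and `S_{p+2}`. -/
theorem stmt11 (ρ p : ℝ) (h0 : 0 < ρ) (h1 : ρ < 1)
    (hm1 : p ≠ -1) (hp1 : p ≠ 1) (hp3 : p ≠ 3) :
    Iq ρ (p - 4) =
      -Rq ρ (p - 3) / (p - 3) - Rq ρ (p - 1) / ((p - 1) * (p - 3)) -
        p * Rq ρ (p + 1) / ((p + 1) * (p - 1) * (p - 3)) +
        (p + 2) * p * Sq ρ (p + 2) / ((p + 1) * (p - 1) * (p - 3)) ∧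
    Iq ρ (p - 2) =
      -Rq ρ (p - 1) / (p - 1) - Rq ρ (p + 1) / ((p + 1) * (p - 1)) +
        (p + 2) * Sq ρ (p + 2) / ((p + 1) * (p - 1)) := by
  have hp3' : p - 3 ≠ 0 := sub_ne_zero.2 hp3
  have hp1' : p - 1 ≠ 0 := sub_ne_zero.2 hp1
  have hm1' : p + 1 ≠ 0 := fun h => hm1 (by linarith)
  have e4 := Sq_reduction h0 h1 (p - 4)
  have e2 := Sq_reduction h0 h1 (p - 2)
  have e0 := Sq_reduction h0 h1 p
  rw [Iq_eq_Sq_sub_Sq h0 h1, Iq_eq_Sq_sub_Sq h0 h1]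
  constructor
  · field_simp
    linear_combination (norm := ring_nf) (p + 1) * (p - 1) * e4 + (p + 1) * e2 + p * e0
  · field_simp
    linear_combination (norm := ring_nf) (p + 1) * e2 + e0
end

section
/- Let p ∈ (−1, ∞) \ {0}, let m > 0 and let λ > 0 satisfy λ·(1+m)² ≤ 1, and define γ(z) = 1 − λ(z−m)² for −1 ≤ z ≤ 1 and γ(z) = 0 otherwise. Then for every μ with |μ| < 1: ∫_{−1}^{1} γ(z)·|z − μ|^p dz = (1/(p+1))·(1 − λ(μ−m)²)·((1+μ)^{p+1} + (1−μ)^{p+1}) + (2λ/(p+2))·(μ−m)·((1+μ)^{p+2} − (1−μ)^{p+2}) − (λ/(p+3))·((1+μ)^{p+3} + (1−μ)^{p+3}). -/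
/-!
Expanding `γ` around `μ`, `γ(z) = γ(μ) − 2λ(μ − m)(z − μ) − λ(z − μ)²`, reduces the integral
to the moments `∫_{-1}^{1} (z − μ)^k |z − μ|^p dz` for `k = 0, 1, 2`. After the shift
`t = z − μ` these are `∫_{-(1+μ)}^{1−μ} t^k |t|^p dt`, which split at `0` into two integrals
of `t ↦ t^(p+k)`.
-/

open Real MeasureTheory intervalIntegral Set

-- `|t| ^ q = ‖(t : ℂ) ^ (q : ℂ)‖`, and the complex power is integrable on every interval.
lemma intervalIntegrable_abs_rpow {q : ℝ} (hq : -1 < q) (a b : ℝ) :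
    IntervalIntegrable (fun t : ℝ => |t| ^ q) volume a b := by
  simpa [Complex.norm_cpow_real] using
    (intervalIntegrable_cpow' (a := a) (b := b) (r := q) (by simpa)).norm

lemma intervalIntegrable_abs_sub_rpow {q : ℝ} (hq : -1 < q) (c a b : ℝ) :
    IntervalIntegrable (fun t : ℝ => |t - c| ^ q) volume a b := by
  simpa using (intervalIntegrable_abs_rpow hq (a - c) (b - c)).comp_sub_right c

lemma integral_zero_pow_mul_abs_rpow (k : ℕ) {q : ℝ} (hq : -1 < q) {b : ℝ} (hb : 0 ≤ b) :
    ∫ t in (0 : ℝ)..b, t ^ k * |t| ^ q = b ^ (q + k + 1) / (q + k + 1) := by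
  have hqk : -1 < q + k := by linarith [k.cast_nonneg (α := ℝ)]
  rw [integral_congr_ae (g := fun t => t ^ (q + k)), integral_rpow (Or.inl hqk),
    zero_rpow (by linarith), sub_zero]
  refine ae_of_all _ fun t ht => ?_
  rw [uIoc_of_le hb] at ht
  rw [abs_of_pos ht.1, ← rpow_natCast, ← rpow_add ht.1, add_comm]

lemma integral_neg_pow_mul_abs_rpow (k : ℕ) {q : ℝ} (hq : -1 < q) {a b : ℝ} (ha : 0 ≤ a)
    (hb : 0 ≤ b) :
    ∫ t in (-a)..b, t ^ k * |t| ^ q =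
      (b ^ (q + k + 1) + (-1) ^ k * a ^ (q + k + 1)) / (q + k + 1) := by
  have hint : ∀ c d : ℝ, IntervalIntegrable (fun t : ℝ => t ^ k * |t| ^ q) volume c d :=
    fun c d => (intervalIntegrable_abs_rpow hq c d).continuousOn_mul (continuous_pow k).continuousOn
  have hleft :
      ∫ t in (-a)..0, t ^ k * |t| ^ q = (-1) ^ k * ∫ t in (0 : ℝ)..a, t ^ k * |t| ^ q := by
    rw [← intervalIntegral.integral_const_mul, ← neg_zero, ← integral_comp_neg, neg_zero]
    congr 1 with x
    rw [neg_pow, abs_neg, mul_assoc]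
  rw [← integral_add_adjacent_intervals (hint _ 0) (hint 0 _), hleft,
    integral_zero_pow_mul_abs_rpow k hq ha, integral_zero_pow_mul_abs_rpow k hq hb]
  ring

lemma integral_pow_sub_mul_abs_sub_rpow (k : ℕ) {q a b μ : ℝ} (hq : -1 < q) (ha : a ≤ μ)
    (hb : μ ≤ b) :
    ∫ z in a..b, (z - μ) ^ k * |z - μ| ^ q =
      ((b - μ) ^ (q + k + 1) + (-1) ^ k * (μ - a) ^ (q + k + 1)) / (q + k + 1) := by
  rw [integral_comp_sub_right (fun t => t ^ k * |t| ^ q), ← neg_sub μ a]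
  exact integral_neg_pow_mul_abs_rpow k hq (sub_nonneg.mpr ha) (sub_nonneg.mpr hb)

theorem stmt12_general (p m lam μ : ℝ) (hp : -1 < p) (hμ : |μ| < 1) :
    ∫ z in (-1 : ℝ)..1, (1 - lam * (z - m) ^ 2) * |z - μ| ^ p =
      1 / (p + 1) * (1 - lam * (μ - m) ^ 2) *
          ((1 + μ) ^ (p + 1) + (1 - μ) ^ (p + 1)) +
        2 * lam / (p + 2) * (μ - m) * ((1 + μ) ^ (p + 2) - (1 - μ) ^ (p + 2)) -
        lam / (p + 3) * ((1 + μ) ^ (p + 3) + (1 - μ) ^ (p + 3)) := by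
  obtain ⟨hμ₁, hμ₂⟩ := abs_lt.mp hμ
  have hmoment_int (k : ℕ) :
      IntervalIntegrable (fun z : ℝ => (z - μ) ^ k * |z - μ| ^ p) volume (-1) 1 :=
    (intervalIntegrable_abs_sub_rpow hp μ (-1) 1).continuousOn_mul (by fun_prop)
  have hexpand : (fun z : ℝ => (1 - lam * (z - m) ^ 2) * |z - μ| ^ p) = fun z =>
      (1 - lam * (μ - m) ^ 2) * ((z - μ) ^ 0 * |z - μ| ^ p) +
        -(2 * lam * (μ - m)) * ((z - μ) ^ 1 * |z - μ| ^ p) +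
        -lam * ((z - μ) ^ 2 * |z - μ| ^ p) := by
    funext z; ring
  rw [hexpand,
    integral_add (((hmoment_int 0).const_mul _).add ((hmoment_int 1).const_mul _))
      ((hmoment_int 2).const_mul _),
    integral_add ((hmoment_int 0).const_mul _) ((hmoment_int 1).const_mul _),
    intervalIntegral.integral_const_mul, intervalIntegral.integral_const_mul,
    intervalIntegral.integral_const_mul]
  simp only [integral_pow_sub_mul_abs_sub_rpow _ hp hμ₁.le hμ₂.le]
  have h1 : p + 1 ≠ 0 := by linarith
  have h2 : p + 2 ≠ 0 := by linarith
  have h3 : p + 3 ≠ 0 := by linarith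
  norm_num [add_assoc, add_comm μ 1]
  field_simp
  ring

/-- Closed-form evaluation of the order-`p` mean objective for the toy density
`γ(z) = 1 − λ(z−m)²` on `[−1,1]`. -/
theorem stmt12 (p m lam μ : ℝ) (hp : -1 < p) (hp0 : p ≠ 0) (hm : 0 < m)
    (hlam : 0 < lam) (hconstr : lam * (1 + m) ^ 2 ≤ 1) (hμ : |μ| < 1) :
    ∫ z in (-1 : ℝ)..1, (1 - lam * (z - m) ^ 2) * |z - μ| ^ p =
      1 / (p + 1) * (1 - lam * (μ - m) ^ 2) *
          ((1 + μ) ^ (p + 1) + (1 - μ) ^ (p + 1)) +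
        2 * lam / (p + 2) * (μ - m) * ((1 + μ) ^ (p + 2) - (1 - μ) ^ (p + 2)) -
        lam / (p + 3) * ((1 + μ) ^ (p + 3) + (1 - μ) ^ (p + 3)) :=
  stmt12_general p m lam μ hp hμ
end

section
/- Let h > 0 be fixed. For every integer k, the finite-volume discretisation ψ_k(p) = (1/h)·∫_{(k−1/2)h}^{(k+1/2)h} |x|^p dx of the penaliser Ψ_p(z) = |z|^p satisfies lim_{p→0⁺} ψ_k(p) = 1. In other words, for any fixed bin width h, the finite-volume discretisation of |z|^p converges to the constant unity function as p → 0⁺ (rather than to the discrete mode penaliser which is 0 at k = 0 and 1 elsewhere). -/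
open Filter Topology

/- For `0 < p ≤ 1` the integrand `|x| ^ p` is dominated by `max 1 |x|`, and it tends to `1`
as `p → 0⁺` at every `x ≠ 0`, i.e. almost everywhere. Dominated convergence gives
`∫_a^b |x| ^ p dx → b - a`, which for the bin `[(k - 1/2) h, (k + 1/2) h]` is `h`. -/

lemma abs_rpow_le_max_one_abs (x : ℝ) {p : ℝ} (hp₀ : 0 ≤ p) (hp₁ : p ≤ 1) :
    |x| ^ p ≤ max 1 |x| := by
  rcases le_total |x| 1 with hx | hx
  · exact le_max_of_le_left (Real.rpow_le_one (abs_nonneg x) hx hp₀)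
  · exact le_max_of_le_right (Real.rpow_le_self_of_one_le hx hp₁)

lemma tendsto_abs_rpow_nhdsGT_zero {x : ℝ} (hx : x ≠ 0) :
    Tendsto (fun p : ℝ => |x| ^ p) (𝓝[>] 0) (𝓝 1) := by
  have := (Real.continuousAt_const_rpow (b := 0) (abs_ne_zero.mpr hx)).tendsto
  rw [Real.rpow_zero] at this
  exact this.mono_left nhdsWithin_le_nhds

lemma tendsto_intervalIntegral_abs_rpow_nhdsGT_zero (a b : ℝ) :
    Tendsto (fun p : ℝ => ∫ x in a..b, |x| ^ p) (𝓝[>] 0) (𝓝 (b - a)) := by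
  have hlim : ∫ _ in a..b, (1 : ℝ) = b - a := by simp
  rw [← hlim]
  refine intervalIntegral.tendsto_integral_filter_of_dominated_convergence
    (fun x => max 1 |x|) ?_ ?_ ((continuous_const.max continuous_abs).intervalIntegrable _ _) ?_
  · filter_upwards [self_mem_nhdsWithin] with p (hp : 0 < p)
    exact (continuous_abs.rpow_const fun _ => Or.inr hp.le).aestronglyMeasurable
  · filter_upwards [Ioo_mem_nhdsGT (zero_lt_one' ℝ)] with p hp
    refine MeasureTheory.ae_of_all _ fun x _ => ?_
    rw [Real.norm_of_nonneg (Real.rpow_nonneg (abs_nonneg x) p)]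
    exact abs_rpow_le_max_one_abs x hp.1.le hp.2.le
  · filter_upwards [MeasureTheory.volume.ae_ne 0] with x hx _
    exact tendsto_abs_rpow_nhdsGT_zero hx

/-- For any fixed bin width `h > 0` and any bin index `k`, the finite-volume
discretisation `ψ_k(p) = (1/h)∫_{(k−1/2)h}^{(k+1/2)h} |x|^p dx` of the penaliser `|z|^p`
converges to the constant `1` as `p → 0⁺`. -/
theorem stmt14 (h : ℝ) (hh : 0 < h) (k : ℤ) :
    Tendsto
      (fun p : ℝ =>
        (1 / h) * ∫ x in (((k : ℝ) - 1 / 2) * h)..(((k : ℝ) + 1 / 2) * h), |x| ^ p)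
      (nhdsWithin 0 (Set.Ioi 0)) (nhds 1) := by
  have hwidth : ((k : ℝ) + 1 / 2) * h - ((k : ℝ) - 1 / 2) * h = h := by ring
  have hlim := (tendsto_intervalIntegral_abs_rpow_nhdsGT_zero
    (((k : ℝ) - 1 / 2) * h) (((k : ℝ) + 1 / 2) * h)).const_mul (1 / h)
  rwa [hwidth, one_div_mul_cancel hh.ne'] at hlim
end

section
/- Let β ≥ δ > 0, let u(x,y) = β x² + δ y², and let p be a real number with p ≥ 1 − δ/β. Then at every point (x,y) ≠ (0,0) the right-hand side of the M-smoother PDE is nonnegative: u_ξξ + (p−1)·u_ηη = (2β²δx² + 2βδ²y² + (p−1)(2β³x² + 2δ³y²))/(β²x² + δ²y²) ≥ 0, where η = ∇u/|∇u| and ξ is a unit vector orthogonal to ∇u. Conversely, if p < 1 − β/δ, then u_ξξ + (p−1)·u_ηη < 0 at every (x,y) ≠ (0,0). -/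
/-- The anisotropic quadratic function `u(x,y) = βx² + δy²`. -/
noncomputable def uQuad (β δ : ℝ) (v : EuclideanSpace ℝ (Fin 2)) : ℝ :=
  β * v 0 ^ 2 + δ * v 1 ^ 2

/-- Second directional derivative `vᵀ (D²u)(x) v`. -/
noncomputable def secondDirDeriv (u : EuclideanSpace ℝ (Fin 2) → ℝ)
    (x v : EuclideanSpace ℝ (Fin 2)) : ℝ :=
  iteratedFDeriv ℝ 2 u x ![v, v]

/-- Unit gradient direction `η = ∇u/|∇u|` of `uQuad` at `v`. -/
noncomputable def etaQ (β δ : ℝ) (v : EuclideanSpace ℝ (Fin 2)) : EuclideanSpace ℝ (Fin 2) :=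
  ‖gradient (uQuad β δ) v‖⁻¹ • gradient (uQuad β δ) v

/-- Unit level-line direction `ξ ⟂ ∇u` of `uQuad` at `v`. -/
noncomputable def xiQ (β δ : ℝ) (v : EuclideanSpace ℝ (Fin 2)) : EuclideanSpace ℝ (Fin 2) :=
  ‖gradient (uQuad β δ) v‖⁻¹ •
    (EuclideanSpace.single (0 : Fin 2) (-(gradient (uQuad β δ) v 1)) +
      EuclideanSpace.single (1 : Fin 2) (gradient (uQuad β δ) v 0))

/-!
The Hessian of `u` is the constant matrix `diag(2β, 2δ)` and `∇u = (2βx, 2δy)`, so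
`|∇u|² u_ηη = 2β(2βx)² + 2δ(2δy)²` while `u_ξξ` is the same expression with the components of
`∇u` swapped. This yields the closed form; its numerator factors as
`2β²x²(δ − (1−p)β) + 2δ²y²(β − (1−p)δ)`. The condition `p ≥ 1 − δ/β` makes the first bracket
nonnegative and `p < 1 − β/δ` makes the second negative; since `δ ≤ β`, the other bracket then
has the same sign.
-/

section

local notation "ℝ²" => EuclideanSpace ℝ (Fin 2)

local notation "coord" => EuclideanSpace.proj (𝕜 := ℝ) (ι := Fin 2)

variable (β δ : ℝ)

theorem hasFDerivAt_uQuad (x : ℝ²) :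
    HasFDerivAt (uQuad β δ) ((2 * β * x 0) • coord 0 + (2 * δ * x 1) • coord 1) x := by
  refine ((((coord 0).hasFDerivAt.pow 2).const_mul β).add
    (((coord 1).hasFDerivAt.pow 2).const_mul δ)).congr_fderiv ?_
  ext w
  simp only [PiLp.proj_apply, Nat.add_one_sub_one, pow_one, nsmul_eq_mul, Nat.cast_ofNat,
    add_apply, smul_apply, smul_eq_mul]
  ring

theorem secondDirDeriv_uQuad (x w : ℝ²) :
    secondDirDeriv (uQuad β δ) x w = 2 * β * w 0 ^ 2 + 2 * δ * w 1 ^ 2 := by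
  have hfderiv : fderiv ℝ (uQuad β δ) =
      fun y => (2 * β * y 0) • coord 0 + (2 * δ * y 1) • coord 1 :=
    funext fun y => (hasFDerivAt_uQuad β δ y).fderiv
  have hcoord (c : ℝ) (i : Fin 2) : HasFDerivAt (fun y : ℝ² => c * y i) (c • coord i) x :=
    (coord i).hasFDerivAt.const_mul c
  have hhess : HasFDerivAt (fun y : ℝ² => (2 * β * y 0) • coord 0 + (2 * δ * y 1) • coord 1) _ x :=
    ((hcoord (2 * β) 0).smul_const (coord 0)).add ((hcoord (2 * δ) 1).smul_const (coord 1))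
  rw [secondDirDeriv, iteratedFDeriv_two_apply, hfderiv, hhess.fderiv]
  simp only [Matrix.cons_val_zero, Matrix.cons_val_one, Matrix.cons_val_fin_one,
    add_apply, ContinuousLinearMap.smulRight_apply,
    smul_apply, PiLp.proj_apply, smul_eq_mul]
  ring

theorem gradient_uQuad (x : ℝ²) :
    gradient (uQuad β δ) x = !₂[2 * β * x 0, 2 * δ * x 1] := by
  refine (hasGradientAt_iff_hasFDerivAt.2 ((hasFDerivAt_uQuad β δ x).congr_fderiv ?_)).gradient
  ext w
  simp only [InnerProductSpace.toDual_apply_apply, PiLp.inner_apply, RCLike.inner_apply,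
    Real.ringHom_apply, Fin.sum_univ_two, Matrix.cons_val_zero, Matrix.cons_val_one,
    Matrix.cons_val_fin_one, add_apply, smul_apply,
    PiLp.proj_apply, smul_eq_mul]
  ring

theorem norm_gradient_uQuad_sq (v : ℝ²) :
    ‖gradient (uQuad β δ) v‖ ^ 2 = 4 * (β ^ 2 * v 0 ^ 2 + δ ^ 2 * v 1 ^ 2) := by
  rw [gradient_uQuad, EuclideanSpace.norm_sq_eq]
  simp only [Real.norm_eq_abs, sq_abs, Fin.sum_univ_two, Matrix.cons_val_zero,
    Matrix.cons_val_one, Matrix.cons_val_fin_one]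
  ring

theorem secondDirDeriv_xiQ_add_etaQ (p : ℝ) (v : ℝ²) :
    secondDirDeriv (uQuad β δ) v (xiQ β δ v) +
        (p - 1) * secondDirDeriv (uQuad β δ) v (etaQ β δ v) =
      (2 * β ^ 2 * δ * v 0 ^ 2 + 2 * β * δ ^ 2 * v 1 ^ 2 +
          (p - 1) * (2 * β ^ 3 * v 0 ^ 2 + 2 * δ ^ 3 * v 1 ^ 2)) /
        (β ^ 2 * v 0 ^ 2 + δ ^ 2 * v 1 ^ 2) := by
  have hN : ‖gradient (uQuad β δ) v‖⁻¹ ^ 2 = 4⁻¹ * (β ^ 2 * v 0 ^ 2 + δ ^ 2 * v 1 ^ 2)⁻¹ := by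
    rw [inv_pow, norm_gradient_uQuad_sq, mul_inv]
  simp only [secondDirDeriv_uQuad, xiQ, etaQ]
  generalize ‖gradient (uQuad β δ) v‖⁻¹ = c at hN ⊢
  simp only [Fin.isValue, gradient_uQuad, Matrix.cons_val_one, Matrix.cons_val_fin_one,
    Matrix.cons_val_zero, smul_add, PiLp.add_apply, PiLp.smul_apply, PiLp.single_eq_same,
    smul_eq_mul, mul_neg, ne_eq, zero_ne_one, not_false_eq_true, PiLp.single_eq_of_ne, mul_zero,
    add_zero, even_two, Even.neg_pow, one_ne_zero, zero_add]
  linear_combination (8 * β ^ 2 * δ * v 0 ^ 2 + 8 * β * δ ^ 2 * v 1 ^ 2 +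
    (p - 1) * (8 * β ^ 3 * v 0 ^ 2 + 8 * δ ^ 3 * v 1 ^ 2)) * hN

theorem sq_mul_add_sq_mul_pos {β δ : ℝ} (hβ : β ≠ 0) (hδ : δ ≠ 0) {v : ℝ²} (hv : v ≠ 0) :
    0 < β ^ 2 * v 0 ^ 2 + δ ^ 2 * v 1 ^ 2 := by
  have hcoord : v 0 ≠ 0 ∨ v 1 ≠ 0 := by
    contrapose! hv
    ext i
    fin_cases i <;> simp [hv]
  rcases hcoord with h | h <;> positivity

end

section

variable {β δ p : ℝ} (a b : ℝ)

theorem uQuad_speed_numerator_eq :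
    2 * β ^ 2 * δ * a ^ 2 + 2 * β * δ ^ 2 * b ^ 2 +
        (p - 1) * (2 * β ^ 3 * a ^ 2 + 2 * δ ^ 3 * b ^ 2) =
      2 * β ^ 2 * a ^ 2 * (δ - (1 - p) * β) + 2 * δ ^ 2 * b ^ 2 * (β - (1 - p) * δ) := by
  ring

theorem uQuad_speed_numerator_nonneg (hδ : 0 < δ) (hβδ : δ ≤ β) (hp : 1 - δ / β ≤ p) :
    0 ≤ 2 * β ^ 2 * δ * a ^ 2 + 2 * β * δ ^ 2 * b ^ 2 +
      (p - 1) * (2 * β ^ 3 * a ^ 2 + 2 * δ ^ 3 * b ^ 2) := by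
  have hβ : 0 < β := hδ.trans_le hβδ
  have hx : (1 - p) * β ≤ δ := (le_div_iff₀ hβ).1 (by linarith)
  have hy : (1 - p) * δ ≤ β := by nlinarith
  rw [uQuad_speed_numerator_eq]
  exact add_nonneg (mul_nonneg (by positivity) (by linarith))
    (mul_nonneg (by positivity) (by linarith))

theorem uQuad_speed_numerator_neg (hδ : 0 < δ) (hβδ : δ ≤ β) (hp : p < 1 - β / δ)
    (hab : 0 < β ^ 2 * a ^ 2 + δ ^ 2 * b ^ 2) :
    2 * β ^ 2 * δ * a ^ 2 + 2 * β * δ ^ 2 * b ^ 2 +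
      (p - 1) * (2 * β ^ 3 * a ^ 2 + 2 * δ ^ 3 * b ^ 2) < 0 := by
  have hy : β < (1 - p) * δ := (div_lt_iff₀ hδ).1 (by linarith)
  have hxy : δ - (1 - p) * β ≤ β - (1 - p) * δ := by nlinarith
  rw [uQuad_speed_numerator_eq]
  calc 2 * β ^ 2 * a ^ 2 * (δ - (1 - p) * β) + 2 * δ ^ 2 * b ^ 2 * (β - (1 - p) * δ)
      ≤ 2 * β ^ 2 * a ^ 2 * (β - (1 - p) * δ) + 2 * δ ^ 2 * b ^ 2 * (β - (1 - p) * δ) := by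
        gcongr
    _ = 2 * (β ^ 2 * a ^ 2 + δ ^ 2 * b ^ 2) * (β - (1 - p) * δ) := by ring
    _ < 0 := mul_neg_of_pos_of_neg (by positivity) (by linarith)

end

/-- Sign of the M-smoother PDE right-hand side `u_ξξ + (p−1)u_ηη` for `u = βx² + δy²`:
nonnegative if `p ≥ 1 − δ/β`, and negative everywhere if `p < 1 − β/δ`. -/
theorem stmt16 (β δ : ℝ) (hβδ : δ ≤ β) (hδ : 0 < δ)
    (v : EuclideanSpace ℝ (Fin 2)) (hv : v ≠ 0) (p : ℝ) :
    secondDirDeriv (uQuad β δ) v (xiQ β δ v) +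
        (p - 1) * secondDirDeriv (uQuad β δ) v (etaQ β δ v) =
      (2 * β ^ 2 * δ * v 0 ^ 2 + 2 * β * δ ^ 2 * v 1 ^ 2 +
          (p - 1) * (2 * β ^ 3 * v 0 ^ 2 + 2 * δ ^ 3 * v 1 ^ 2)) /
        (β ^ 2 * v 0 ^ 2 + δ ^ 2 * v 1 ^ 2) ∧
    (1 - δ / β ≤ p →
      0 ≤ secondDirDeriv (uQuad β δ) v (xiQ β δ v) +
          (p - 1) * secondDirDeriv (uQuad β δ) v (etaQ β δ v)) ∧
    (p < 1 - β / δ →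
      secondDirDeriv (uQuad β δ) v (xiQ β δ v) +
          (p - 1) * secondDirDeriv (uQuad β δ) v (etaQ β δ v) < 0) := by
  have hβ : 0 < β := hδ.trans_le hβδ
  have hD := sq_mul_add_sq_mul_pos hβ.ne' hδ.ne' hv
  rw [secondDirDeriv_xiQ_add_etaQ]
  exact ⟨rfl, fun hp => div_nonneg (uQuad_speed_numerator_nonneg _ _ hδ hβδ hp) hD.le,
    fun hp => div_neg_of_neg_of_pos (uQuad_speed_numerator_neg _ _ hδ hβδ hp hD) hD⟩
end
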